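/- arXiv:2204.14094 — 5 statements merged into one kernel-verified Lean document; each statement's English description precedes it below -/
import Mathlib

section
/- For a single-peaked preference profile with axis c_1 ▷ ... ▷ c_m, every candidate c_i experiences its worst pairwise defeat against one of its neighbours on the axis: there exists ℓ ∈ {i−1, i+1} (within bounds) such that pop(c_ℓ, c_i) ≥ pop(c_j, c_i) for all j ≠ i, where pop(a,b) is the number of voters preferring a to b minus the number preferring b to a. -/
open Finset

/-- A ranking over `m` candidates: `r c` is the position of candidate `c`
(position `0` = most preferred). -/
abbrev Ranking (m : ℕ) := Equiv.Perm (Fin m)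

/-- Voter with ranking `r` prefers `a` to `b`. -/
def Prefers {m : ℕ} (r : Ranking m) (a b : Fin m) : Prop := r a < r b

/-- A ranking is single-peaked w.r.t. the axis `c_0 ▷ c_1 ▷ ... ▷ c_{m-1}`. -/
def IsSinglePeaked {m : ℕ} (r : Ranking m) : Prop :=
  ∀ i j k : Fin m, i < j → j < k →
    (Prefers r i j → Prefers r j k) ∧ (Prefers r k j → Prefers r j i)

/-- A profile is single-peaked if all its rankings are. -/
def SPProfile {V : Type*} {m : ℕ} (P : V → Ranking m) : Prop :=
  ∀ v, IsSinglePeaked (P v)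

/-- Popularity margin of `a` over `b`. -/
noncomputable def pop {V : Type*} [Fintype V] {m : ℕ} (P : V → Ranking m)
    (a b : Fin m) : ℤ :=
  (Nat.card {v : V // Prefers (P v) a b} : ℤ) -
    (Nat.card {v : V // Prefers (P v) b a} : ℤ)

/-- Minimax Condorcet score of candidate `c`: worst defeat margin. -/
noncomputable def mmc {V : Type*} [Fintype V] {m : ℕ} (P : V → Ranking m)
    (c : Fin m) : WithBot ℤ :=
  (Finset.univ.erase c).sup (fun c' => ((pop P c' c : ℤ) : WithBot ℤ))

/-- Kendall's tau distance between two rankings. -/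
noncomputable def kt {m : ℕ} (r s : Ranking m) : ℕ :=
  Nat.card {p : Fin m × Fin m //
    p.1 < p.2 ∧ ¬ (Prefers r p.1 p.2 ↔ Prefers s p.1 p.2)}

/-- Kemeny score of ranking `r` w.r.t. profile `P`. -/
noncomputable def ktSum {V : Type*} [Fintype V] {m : ℕ} (r : Ranking m)
    (P : V → Ranking m) : ℕ :=
  ∑ v, kt r (P v)

/-- The peak (top candidate) of a ranking. -/
def peak {m : ℕ} (r : Ranking (m + 1)) : Fin (m + 1) := r.symm 0

/-! A voter of a single-peaked profile who prefers `j` to `i` also prefers to `i` every candidate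
strictly between `j` and `i` on the axis. So `pop P j i` can only grow as `j` approaches `i` from
either side, and the worst defeat of `i` is against the better of its (one or two) neighbours. -/

theorem prefers_of_not_prefers {m : ℕ} {r : Ranking m} {a b : Fin m} (hab : a ≠ b)
    (h : ¬ Prefers r a b) : Prefers r b a :=
  lt_of_le_of_ne (not_lt.mp h) (r.injective.ne hab.symm)

namespace IsSinglePeaked

variable {m : ℕ} {r : Ranking m}

theorem prefers_of_lt_of_lt (hr : IsSinglePeaked r) {i j k : Fin m} (hjk : j < k) (hki : k < i)
    (h : Prefers r j i) : Prefers r k i := by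
  by_cases hj : Prefers r j k
  · exact (hr j k i hjk hki).1 hj
  · exact lt_trans (prefers_of_not_prefers hjk.ne hj) h

theorem prefers_of_gt_of_gt (hr : IsSinglePeaked r) {i j k : Fin m} (hik : i < k) (hkj : k < j)
    (h : Prefers r j i) : Prefers r k i := by
  by_cases hj : Prefers r j k
  · exact (hr i k j hik hkj).2 hj
  · exact lt_trans (prefers_of_not_prefers hkj.ne' hj) h

end IsSinglePeaked

def AxisAdjacent {m : ℕ} (ℓ i : Fin m) : Prop :=
  (ℓ : ℕ) + 1 = (i : ℕ) ∨ (i : ℕ) + 1 = (ℓ : ℕ)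

section Margins

variable {V : Type*} [Fintype V] {m : ℕ} (P : V → Ranking m)

theorem card_prefers_le_card_prefers {a b c d : Fin m}
    (h : ∀ v, Prefers (P v) a b → Prefers (P v) c d) :
    Nat.card {v : V // Prefers (P v) a b} ≤ Nat.card {v : V // Prefers (P v) c d} :=
  Nat.card_le_card_of_injective _ (Subtype.impEmbedding _ _ h).injective

/-- Rankings are strict, so the hypothesis also gives: every voter preferring `i` to `k` prefers
`i` to `j`. Hence both counts in the margin move the right way. -/
theorem pop_le_pop_of_forall_prefers {i j k : Fin m} (hji : j ≠ i)
    (h : ∀ v, Prefers (P v) j i → Prefers (P v) k i) :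
    pop P j i ≤ pop P k i := by
  have h' : ∀ v, Prefers (P v) i k → Prefers (P v) i j := fun v hik => by
    by_contra hij
    exact lt_asymm hik (h v (prefers_of_not_prefers hji.symm hij))
  have hwin := card_prefers_le_card_prefers P h
  have hlose := card_prefers_le_card_prefers P h'
  simp only [pop]
  omega

theorem exists_axisAdjacent_pop_le (hsp : SPProfile P) {i j : Fin m} (hji : j ≠ i) :
    ∃ ℓ, AxisAdjacent ℓ i ∧ pop P j i ≤ pop P ℓ i := by
  rcases hji.lt_or_gt with hlt | hgt
  · have hi : (j : ℕ) < i := hlt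
    let ℓ : Fin m := ⟨i - 1, by omega⟩
    refine ⟨ℓ, Or.inl (by simp only [ℓ]; omega), ?_⟩
    obtain hj | hj := (show (j : ℕ) ≤ ℓ by simp only [ℓ]; omega).eq_or_lt
    · rw [Fin.ext hj]
    · exact pop_le_pop_of_forall_prefers P hji fun v =>
        (hsp v).prefers_of_lt_of_lt hj (by simp only [ℓ, Fin.lt_def]; omega)
  · have hi : (i : ℕ) < j := hgt
    let ℓ : Fin m := ⟨i + 1, by omega⟩
    refine ⟨ℓ, Or.inr rfl, ?_⟩
    obtain hj | hj := (show (ℓ : ℕ) ≤ j by simp only [ℓ]; omega).eq_or_lt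
    · rw [Fin.ext hj.symm]
    · exact pop_le_pop_of_forall_prefers P hji fun v =>
        (hsp v).prefers_of_gt_of_gt (by simp only [ℓ, Fin.lt_def]; omega) hj

end Margins

theorem exists_axisAdjacent {m : ℕ} (hm : 2 ≤ m) (i : Fin m) : ∃ ℓ : Fin m, AxisAdjacent ℓ i := by
  by_cases hi : (i : ℕ) = 0
  · exact ⟨⟨1, by omega⟩, Or.inr (by simp only [hi])⟩
  · exact ⟨⟨i - 1, by omega⟩, Or.inl (by simp only; omega)⟩

/-- in a single-peaked profile every candidate experiences a worst
pairwise defeat against an axis-neighbour. -/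
theorem stmt_2 {V : Type*} [Fintype V] {m : ℕ} (hm : 2 ≤ m)
    (P : V → Ranking m) (hsp : SPProfile P) :
    ∀ i : Fin m, ∃ ℓ : Fin m,
      ((ℓ : ℕ) + 1 = (i : ℕ) ∨ (i : ℕ) + 1 = (ℓ : ℕ)) ∧
      ∀ j : Fin m, j ≠ i → pop P j i ≤ pop P ℓ i := by
  classical
  intro i
  obtain ⟨ℓ₀, hℓ₀⟩ := exists_axisAdjacent hm i
  obtain ⟨ℓ, hℓ, hmax⟩ := (univ.filter (AxisAdjacent · i)).exists_max_image (pop P · i)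
    ⟨ℓ₀, mem_filter.mpr ⟨mem_univ _, hℓ₀⟩⟩
  refine ⟨ℓ, (mem_filter.mp hℓ).2, fun j hji => ?_⟩
  obtain ⟨ℓ', hℓ', hj⟩ := exists_axisAdjacent_pop_le P hsp hji
  exact hj.trans (hmax ℓ' (mem_filter.mpr ⟨mem_univ _, hℓ'⟩))
end

section
/- Every single-peaked preference profile admits a weak Condorcet winner, i.e., a candidate c such that for every other candidate c' the number of voters preferring c to c' is at least the number of voters preferring c' to c. -/
open Finset

/-!
Median voter theorem. Order the voters by their peaks along the axis and let `c` be a median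
peak, so that at most half of the voters have their peak strictly on either side of `c`.
If `c'` lies on one side of `c`, then by single-peakedness every voter whose peak is on the
other side of `c`, or at `c` itself, prefers `c` to `c'`; these voters form at least half of
the electorate, and only the remaining ones can prefer `c'` to `c`.
-/

section Median

variable {V α : Type*} [Fintype V] [LinearOrder α]

theorem exists_median [Fintype α] [Nonempty α] (f : V → α) :
    ∃ c, 2 * #{v | f v < c} ≤ Fintype.card V ∧ 2 * #{v | c < f v} ≤ Fintype.card V := by
  obtain ⟨top, htop⟩ : ∃ top : α, ∀ a, a ≤ top := Finite.exists_max id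
  have hall : #{v | f v ≤ top} = Fintype.card V := by
    rw [filter_true_of_mem fun v _ => htop (f v), card_univ]
  have hne : ({c | Fintype.card V ≤ 2 * #{v | f v ≤ c}} : Finset α).Nonempty :=
    ⟨top, by simp only [mem_filter, mem_univ, true_and, hall]; omega⟩
  obtain ⟨c, hc, hmin⟩ := exists_min_image _ id hne
  simp only [mem_filter, mem_univ, true_and, id] at hc hmin
  refine ⟨c, ?_, ?_⟩
  · by_contra! hlt
    obtain ⟨w, hw, hwmax⟩ := exists_max_image ({v | f v < c} : Finset V) f
      (card_pos.1 (by omega))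
    have hsub : #{v | f v < c} ≤ #{v | f v ≤ f w} :=
      card_le_card fun v hv => mem_filter.2 ⟨mem_univ v, hwmax v hv⟩
    exact (hmin (f w) (by omega)).not_gt (by simpa using hw)
  · have hsplit := card_filter_add_card_filter_not (s := univ) (fun v => f v ≤ c)
    simp only [not_le, card_univ] at hsplit
    omega

theorem card_filter_le_card_filter_of_two_mul_le {p q r : V → Prop}
    [DecidablePred p] [DecidablePred q] [DecidablePred r]
    (hpr : ∀ v, p v → r v) (hrq : ∀ v, ¬ r v → q v) (hr : 2 * #{v | r v} ≤ Fintype.card V) :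
    #{v | p v} ≤ #{v | q v} := by
  have hsplit := card_filter_add_card_filter_not (s := univ) fun v => r v
  rw [card_univ] at hsplit
  calc #{v | p v} ≤ #{v | r v} := card_le_card (monotone_filter_right _ fun v _ => hpr v)
    _ ≤ #{v | ¬ r v} := by omega
    _ ≤ #{v | q v} := card_le_card (monotone_filter_right _ fun v _ => hrq v)

end Median

section SinglePeaked

variable {m : ℕ}

theorem Prefers.asymm {r : Ranking m} {a b : Fin m} (h : Prefers r a b) : ¬ Prefers r b a :=
  lt_asymm h

theorem prefers_peak {r : Ranking (m + 1)} {a : Fin (m + 1)} (ha : a ≠ peak r) :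
    Prefers r (peak r) a := by
  show r (r.symm 0) < r a
  rw [r.apply_symm_apply]
  exact Fin.pos_of_ne_zero fun h => ha (by rw [peak, ← h, Equiv.symm_apply_apply])

theorem IsSinglePeaked.prefers_of_peak_le_of_lt {r : Ranking (m + 1)} (hr : IsSinglePeaked r)
    {a b : Fin (m + 1)} (ha : peak r ≤ a) (hab : a < b) : Prefers r a b := by
  rcases ha.eq_or_lt with rfl | ha
  · exact prefers_peak hab.ne'
  · exact (hr _ a b ha hab).1 (prefers_peak ha.ne')

theorem IsSinglePeaked.prefers_of_lt_of_le_peak {r : Ranking (m + 1)} (hr : IsSinglePeaked r)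
    {a b : Fin (m + 1)} (hb : b ≤ peak r) (hab : a < b) : Prefers r b a := by
  rcases hb.eq_or_lt with rfl | hb
  · exact prefers_peak hab.ne
  · exact (hr a b _ hab hb).2 (prefers_peak hb.ne)

end SinglePeaked

/-- every single-peaked profile admits a weak Condorcet winner. -/
theorem stmt_5 {V : Type*} [Fintype V] {m : ℕ} (P : V → Ranking (m + 1))
    (hsp : SPProfile P) :
    ∃ c : Fin (m + 1), ∀ c' : Fin (m + 1), c' ≠ c →
      Nat.card {v : V // Prefers (P v) c' c} ≤ Nat.card {v : V // Prefers (P v) c c'} := by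
  classical
  obtain ⟨c, hbelow, habove⟩ := exists_median fun v => peak (P v)
  refine ⟨c, fun c' hne => ?_⟩
  simp only [Nat.card_eq_fintype_card, Fintype.card_subtype]
  rcases hne.lt_or_gt with hlt | hgt
  · refine card_filter_le_card_filter_of_two_mul_le (r := fun v => peak (P v) < c)
      (fun v hv => not_le.1 fun hle => ?_)
      (fun v hv => (hsp v).prefers_of_lt_of_le_peak (not_lt.1 hv) hlt) hbelow
    exact ((hsp v).prefers_of_lt_of_le_peak hle hlt).asymm hv
  · refine card_filter_le_card_filter_of_two_mul_le (r := fun v => c < peak (P v))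
      (fun v hv => not_le.1 fun hle => ?_)
      (fun v hv => (hsp v).prefers_of_peak_le_of_lt (not_lt.1 hv) hgt) habove
    exact ((hsp v).prefers_of_peak_le_of_lt hle hgt).asymm hv
end

section
/- In a single-peaked profile, every Kemeny ranking places a weak Condorcet loser last: if candidate c is weakly beaten by every other candidate in pairwise majority comparison, then appending c at the bottom of any Kemeny ranking of the profile with c removed yields a Kemeny ranking of the full profile. -/
/-!
Split the Kemeny score of a ranking of all candidates into the disagreements on the pairs `{c, x}`
and the score of its restriction to the other candidates. On `{c, x}` a ranking pays either the
voters ranking `c` above `x` or those ranking `x` above `c`; as `c` is a weak Condorcet loser the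
former is the smaller, and it is what putting `c` last pays. The restriction costs at least as much
as the Kemeny ranking `r` of the other candidates.
-/

open Finset

/-- Number of ordered pairs on which relation `r` puts `p.1` above `p.2` but
`s` does the opposite (Kendall tau disagreements for strict total orders). -/
noncomputable def disag {α : Type*} (r s : α → α → Prop) : ℕ :=
  Nat.card {p : α × α // r p.1 p.2 ∧ s p.2 p.1}

section Kemeny

variable {V α : Type*}

noncomputable def voteCount (P : V → α → α → Prop) (x y : α) : ℕ :=
  Nat.card {v : V // P v x y}

def IsWeakCondorcetLoser (P : V → α → α → Prop) (c : α) : Prop :=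
  ∀ x, x ≠ c → voteCount P c x ≤ voteCount P x c

def IsKemenyRanking [Fintype V] (P : V → α → α → Prop) (r : α → α → Prop) : Prop :=
  IsStrictTotalOrder α r ∧
    ∀ s : α → α → Prop, IsStrictTotalOrder α s → ∑ v, disag r (P v) ≤ ∑ v, disag s (P v)

def appendBottom (c : α) (r : {x // x ≠ c} → {x // x ≠ c} → Prop) (x y : α) : Prop :=
  (x ≠ c ∧ y = c) ∨ ∃ (hx : x ≠ c) (hy : y ≠ c), r ⟨x, hx⟩ ⟨y, hy⟩

noncomputable def pairDisag (P : V → α → α → Prop) (t : α → α → Prop) [DecidableRel t]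
    (c x : α) : ℕ :=
  (if t c x then voteCount P x c else 0) + (if t x c then voteCount P c x else 0)

theorem sum_disag_eq_sum_voteCount [Fintype V] [Fintype α] (P : V → α → α → Prop)
    (t : α → α → Prop) [DecidableRel t] :
    ∑ v, disag t (P v) = ∑ x, ∑ y, if t x y then voteCount P y x else 0 := by
  classical
  simp only [disag, voteCount, Nat.card_eq_fintype_card, Fintype.card_subtype, card_filter,
    Fintype.sum_prod_type, ite_and]
  rw [sum_comm]
  refine sum_congr rfl fun x _ => ?_
  rw [sum_comm]
  simp only [sum_ite_irrel, sum_const_zero]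

theorem sum_disag_eq_sum_pairDisag_add [Fintype V] [Fintype α] [DecidableEq α]
    (P : V → α → α → Prop) (c : α) (t : α → α → Prop) [DecidableRel t] (htc : ¬ t c c) :
    ∑ v, disag t (P v) =
      ∑ x : {x // x ≠ c}, pairDisag P t c x +
        ∑ v, disag (fun a b : {x // x ≠ c} => t a b) (fun a b => P v a b) := by
  simp only [sum_disag_eq_sum_voteCount, Fintype.sum_eq_add_sum_subtype_ne _ c, if_neg htc,
    zero_add, sum_add_distrib, pairDisag, add_assoc]
  rfl

variable {c : α} {r : {x // x ≠ c} → {x // x ≠ c} → Prop}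

theorem isStrictTotalOrder_appendBottom [IsStrictTotalOrder _ r] :
    IsStrictTotalOrder α (appendBottom c r) where
  toTrichotomous := Std.trichotomous_of_rel_or_eq_or_rel_swap fun {x y} => by
    by_cases hx : x = c <;> by_cases hy : y = c
    · exact .inr (.inl (hx.trans hy.symm))
    · exact .inr (.inr (.inl ⟨hy, hx⟩))
    · exact .inl (.inl ⟨hx, hy⟩)
    · rcases trichotomous_of r ⟨x, hx⟩ ⟨y, hy⟩ with h | h | h
      · exact .inl (.inr ⟨hx, hy, h⟩)
      · exact .inr (.inl (congrArg Subtype.val h))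
      · exact .inr (.inr (.inr ⟨hy, hx, h⟩))
  irrefl := by
    rintro x (⟨hx, rfl⟩ | ⟨_, _, h⟩)
    · exact hx rfl
    · exact irrefl _ h
  trans := by
    rintro x y z (⟨-, rfl⟩ | ⟨hx, hy, hxy⟩) (⟨hy', rfl⟩ | ⟨hy', hz, hyz⟩)
    · exact absurd rfl hy'
    · exact absurd rfl hy'
    · exact .inl ⟨hx, rfl⟩
    · exact .inr ⟨hx, hz, _root_.trans hxy hyz⟩

theorem appendBottom_subtype : (fun a b : {x // x ≠ c} => appendBottom c r a b) = r := by
  ext ⟨x, hx⟩ ⟨y, hy⟩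
  simp [appendBottom, hx, hy]

theorem pairDisag_appendBottom [DecidableRel (appendBottom c r)] (P : V → α → α → Prop)
    {x : α} (hx : x ≠ c) : pairDisag P (appendBottom c r) c x = voteCount P c x := by
  simp [pairDisag, appendBottom, hx]

theorem voteCount_le_pairDisag (P : V → α → α → Prop) {s : α → α → Prop} [DecidableRel s]
    [IsStrictTotalOrder α s] {x : α} (hx : x ≠ c)
    (hloser : voteCount P c x ≤ voteCount P x c) : voteCount P c x ≤ pairDisag P s c x := by
  rcases trichotomous_of s c x with h | rfl | h
  · simpa [pairDisag, h, asymm h] using hloser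
  · exact absurd rfl hx
  · simp [pairDisag, h, asymm h]

theorem isKemenyRanking_appendBottom [Fintype V] [Fintype α] {P : V → α → α → Prop}
    (hr : IsKemenyRanking (fun v (a b : {x // x ≠ c}) => P v a b) r)
    (hc : IsWeakCondorcetLoser P c) :
    IsKemenyRanking P (appendBottom c r) := by
  classical
  have := hr.1
  have hE := isStrictTotalOrder_appendBottom (r := r)
  refine ⟨hE, fun s hs => ?_⟩
  have hs' : IsStrictTotalOrder {x // x ≠ c} (fun a b => s a b) :=
    RelEmbedding.isStrictTotalOrder ⟨Function.Embedding.subtype _, Iff.rfl⟩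
  rw [sum_disag_eq_sum_pairDisag_add P c _ (hE.irrefl c),
    sum_disag_eq_sum_pairDisag_add P c s (hs.irrefl c),
    appendBottom_subtype]
  refine add_le_add (sum_le_sum fun x _ => ?_) (hr.2 _ hs')
  rw [pairDisag_appendBottom P x.2]
  exact voteCount_le_pairDisag P x.2 (hc x x.2)

end Kemeny

theorem stmt_8_general {V : Type*} [Fintype V] {m : ℕ}
    (P : V → Fin m → Fin m → Prop)
    (c : Fin m)
    (hloser : ∀ c' : Fin m, c' ≠ c →
      Nat.card {v : V // P v c c'} ≤ Nat.card {v : V // P v c' c})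
    (r : {x : Fin m // x ≠ c} → {x : Fin m // x ≠ c} → Prop)
    (hr : IsStrictTotalOrder _ r)
    (hkem : ∀ s : {x : Fin m // x ≠ c} → {x : Fin m // x ≠ c} → Prop,
      IsStrictTotalOrder _ s →
      ∑ v : V, disag r (fun a b => P v a.1 b.1) ≤
        ∑ v : V, disag s (fun a b => P v a.1 b.1)) :
    -- the extension of `r` by placing `c` last
    IsStrictTotalOrder (Fin m)
      (fun x y => (x ≠ c ∧ y = c) ∨ ∃ (hx : x ≠ c) (hy : y ≠ c), r ⟨x, hx⟩ ⟨y, hy⟩) ∧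
    ∀ s : Fin m → Fin m → Prop, IsStrictTotalOrder (Fin m) s →
      ∑ v : V, disag
          (fun x y => (x ≠ c ∧ y = c) ∨ ∃ (hx : x ≠ c) (hy : y ≠ c), r ⟨x, hx⟩ ⟨y, hy⟩)
          (P v) ≤
        ∑ v : V, disag s (P v) :=
  isKemenyRanking_appendBottom ⟨hr, hkem⟩ hloser

/-- in a single-peaked profile, appending a weak Condorcet loser `c`
at the bottom of any Kemeny ranking of the profile with `c` removed yields a
Kemeny ranking of the full profile. -/
theorem stmt_8 {V : Type*} [Fintype V] {m : ℕ}
    (P : V → Fin m → Fin m → Prop)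
    (hto : ∀ v, IsStrictTotalOrder (Fin m) (P v))
    (hsp : ∀ v, ∀ i j k : Fin m, i < j → j < k →
      (P v i j → P v j k) ∧ (P v k j → P v j i))
    (c : Fin m)
    (hloser : ∀ c' : Fin m, c' ≠ c →
      Nat.card {v : V // P v c c'} ≤ Nat.card {v : V // P v c' c})
    (r : {x : Fin m // x ≠ c} → {x : Fin m // x ≠ c} → Prop)
    (hr : IsStrictTotalOrder _ r)
    (hkem : ∀ s : {x : Fin m // x ≠ c} → {x : Fin m // x ≠ c} → Prop,
      IsStrictTotalOrder _ s →
      ∑ v : V, disag r (fun a b => P v a.1 b.1) ≤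
        ∑ v : V, disag s (fun a b => P v a.1 b.1)) :
    -- the extension of `r` by placing `c` last
    IsStrictTotalOrder (Fin m)
      (fun x y => (x ≠ c ∧ y = c) ∨ ∃ (hx : x ≠ c) (hy : y ≠ c), r ⟨x, hx⟩ ⟨y, hy⟩) ∧
    ∀ s : Fin m → Fin m → Prop, IsStrictTotalOrder (Fin m) s →
      ∑ v : V, disag
          (fun x y => (x ≠ c ∧ y = c) ∨ ∃ (hx : x ≠ c) (hy : y ≠ c), r ⟨x, hx⟩ ⟨y, hy⟩)
          (P v) ≤
        ∑ v : V, disag s (P v) :=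
  stmt_8_general P c hloser r hr hkem
end

section
/- There exists a single-peaked preference profile over 4 candidates (namely one voter with a ≻ b ≻ c ≻ d and two voters with b ≻ c ≻ d ≻ a, single-peaked on the axis a ▷ b ▷ c ▷ d) in which candidate a is the strict Condorcet loser, yet no Minimax Condorcet ranking places a last: both c and d have strictly greater Minimax score than a. -/
open Finset

/-- The ranking b ≻ c ≻ d ≻ a over candidates a = 0, b = 1, c = 2, d = 3. -/
def bcda : Ranking 4 := ⟨![3, 0, 1, 2], ![1, 2, 3, 0], by decide, by decide⟩

/-- The profile of one voter with a ≻ b ≻ c ≻ d and two voters with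
b ≻ c ≻ d ≻ a. -/
def P9 : Fin 3 → Ranking 4 := ![Equiv.refl (Fin 4), bcda, bcda]

/-! Every candidate other than `a` beats `a` by the two `bcda` voters against the one `abcd`
voter, so the Minimax score of `a` is only `1`; but `b` beats `c` and `d` unanimously, so
their scores are at least `3`. A ranking compatible with the scores therefore places `c` or `d`
below `a`. -/

instance Prefers.decidableRel {m : ℕ} (r : Ranking m) : DecidableRel (Prefers r) :=
  fun a b => inferInstanceAs (Decidable (r a < r b))

section Margins

variable {V : Type*} [Fintype V] {m : ℕ} (P : V → Ranking m)

theorem pop_eq_card_filter (a b : Fin m) :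
    pop P a b = (#{v | Prefers (P v) a b} : ℤ) - #{v | Prefers (P v) b a} := by
  simp only [pop, Nat.card_eq_fintype_card, Fintype.card_subtype]

theorem pop_le_mmc {c' c : Fin m} (h : c' ≠ c) : (pop P c' c : WithBot ℤ) ≤ mmc P c :=
  Finset.le_sup (f := fun c' => ((pop P c' c : ℤ) : WithBot ℤ)) (by simpa using h)

theorem mmc_le_iff (c : Fin m) (k : WithBot ℤ) :
    mmc P c ≤ k ↔ ∀ c' ≠ c, (pop P c' c : WithBot ℤ) ≤ k := by
  simp [mmc, Finset.sup_le_iff]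

end Margins

theorem Equiv.Perm.symm_last_ne_of_lt {α : Type*} [Preorder α] {m : ℕ} {f : Fin (m + 1) → α}
    (r : Equiv.Perm (Fin (m + 1))) (hr : ∀ a b, r a ≤ r b → f a ≤ f b) {a b : Fin (m + 1)}
    (hab : f a < f b) : r.symm (Fin.last m) ≠ a := by
  rintro rfl
  exact (hr b _ (by simpa using Fin.le_last (r b))).not_gt hab

theorem P9_singlePeaked : SPProfile P9 := by
  unfold SPProfile IsSinglePeaked
  decide

theorem pop_P9_zero {c : Fin 4} (hc : c ≠ 0) : pop P9 c 0 = 1 := by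
  rw [pop_eq_card_filter]
  revert c
  decide

theorem pop_P9_one_two : pop P9 1 2 = 3 := by
  rw [pop_eq_card_filter]
  decide

theorem pop_P9_one_three : pop P9 1 3 = 3 := by
  rw [pop_eq_card_filter]
  decide

theorem mmc_P9_zero_le_one : mmc P9 0 ≤ (1 : ℤ) :=
  (mmc_le_iff P9 0 _).2 fun _ hc => by rw [pop_P9_zero hc]

theorem mmc_P9_zero_lt {c : Fin 4} (hc : c ≠ 1) (hpop : pop P9 1 c = 3) :
    mmc P9 0 < mmc P9 c :=
  calc mmc P9 0 ≤ (1 : ℤ) := mmc_P9_zero_le_one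
    _ < (3 : ℤ) := by norm_num
    _ = pop P9 1 c := by rw [hpop]
    _ ≤ mmc P9 c := pop_le_mmc P9 hc.symm

/-- in this single-peaked profile, `a` is the strict Condorcet
loser, yet both `c` and `d` have strictly greater Minimax Condorcet score
than `a`, so no MMC ranking places `a` last. -/
theorem stmt_9 :
    SPProfile P9 ∧
    (∀ c' : Fin 4, c' ≠ 0 → 0 < pop P9 c' 0) ∧
    mmc P9 0 < mmc P9 2 ∧ mmc P9 0 < mmc P9 3 ∧
    ∀ r : Ranking 4,
      (∀ a b : Fin 4, r a ≤ r b → mmc P9 a ≤ mmc P9 b) →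
      r.symm (Fin.last 3) ≠ 0 := by
  have h02 : mmc P9 0 < mmc P9 2 := mmc_P9_zero_lt (by decide) pop_P9_one_two
  refine ⟨P9_singlePeaked, fun c hc => by rw [pop_P9_zero hc]; norm_num, h02,
    mmc_P9_zero_lt (by decide) pop_P9_one_three, fun r hr => r.symm_last_ne_of_lt hr h02⟩
end

section
/- Consider a network G = (V, E) where each voter holds a ranking of m candidates, and updates where a voter replaces their ranking by one minimising the sum of Kendall tau distances to the rankings of their neighbours (keeping their old ranking if it is among the minimisers). Every sequence of such Kemeny updates in which each update strictly changes some voter's opinion has length at most |E| · C(m,2). -/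
open Finset

/-!
The potential `Φ(P) = ∑_{{u,v} ∈ E} kt (P u) (P v)` lies between `0` and `|E| · C(m,2)`.
When voter `a` alone changes opinion, only the edges at `a` change their term, and since `kt` is
symmetric `Φ` drops by exactly the drop of `a`'s Kemeny score `∑_{u ~ a} kt (P a) (P u)`,
which is positive at every step. So `Φ` strictly decreases along the sequence.
-/

lemma kt_comm {m : ℕ} (r s : Ranking m) : kt r s = kt s r :=
  Nat.card_congr (Equiv.subtypeEquivRight fun _ => by tauto)

lemma kt_le_choose_two {m : ℕ} (r s : Ranking m) : kt r s ≤ m.choose 2 := by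
  calc kt r s ≤ Nat.card {p : Fin m × Fin m // p.1 < p.2} :=
        Nat.card_le_card_of_injective (fun p => ⟨p.1, p.2.1⟩)
          fun _ _ h => Subtype.ext (Subtype.mk_eq_mk.mp h)
    _ = m.choose 2 := by
        rw [Nat.card_eq_fintype_card, Fintype.card_subtype, Fintype.card_product_filter_lt,
          Fintype.card_fin]

noncomputable def ktSym2 {m : ℕ} : Sym2 (Ranking m) → ℕ := Sym2.lift ⟨kt, kt_comm⟩

@[simp]
lemma ktSym2_mk {m : ℕ} (r s : Ranking m) : ktSym2 s(r, s) = kt r s := rfl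

lemma Fin.le_apply_zero_of_forall_succ_lt {T : ℕ} (φ : Fin (T + 1) → ℕ)
    (h : ∀ t : Fin T, φ t.succ < φ t.castSucc) : T ≤ φ 0 := by
  have hφ : StrictAnti φ := Fin.strictAnti_iff_succ_lt.2 h
  have hcard := Fintype.card_le_of_injective
    (fun i => (⟨φ i, Nat.lt_succ_of_le (hφ.antitone (Fin.zero_le i))⟩ : Fin (φ 0 + 1)))
    fun i j hij => hφ.injective (Fin.mk.inj_iff.1 hij)
  simpa using hcard

namespace SimpleGraph

variable {V α : Type*} [Fintype V] (G : SimpleGraph V) [DecidableRel G.Adj]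

lemma sum_incidenceFinset_eq_sum_neighborFinset [DecidableEq V] {M : Type*} [AddCommMonoid M]
    (h : Sym2 V → M) (a : V) :
    ∑ e ∈ G.incidenceFinset a, h e = ∑ u ∈ G.neighborFinset a, h s(a, u) := by
  have hinc : G.incidenceFinset a = (G.neighborFinset a).image (s(a, ·)) := by
    ext e
    induction e using Sym2.ind with
    | h x y =>
      simp only [mem_incidenceFinset, mk'_mem_incidenceSet_iff, Finset.mem_image,
        mem_neighborFinset, Sym2.eq, Sym2.rel_iff']
      grind [adj_comm]
  rw [hinc, Finset.sum_image fun _ _ _ _ h => Sym2.congr_right.1 h]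

def edgePotential (w : Sym2 α → ℕ) (f : V → α) : ℕ := ∑ e ∈ G.edgeFinset, w (e.map f)

lemma edgePotential_le (w : Sym2 α → ℕ) (f : V → α) {B : ℕ} (hB : ∀ e, w e ≤ B) :
    G.edgePotential w f ≤ #G.edgeFinset * B :=
  (Finset.sum_le_card_nsmul _ _ _ fun e _ => hB (e.map f)).trans_eq (smul_eq_mul _ _)

lemma edgePotential_update_add [DecidableEq V] (w : Sym2 α → ℕ) (f : V → α) (a : V) (x : α) :
    G.edgePotential w (Function.update f a x) + ∑ u ∈ G.neighborFinset a, w s(f a, f u) =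
      G.edgePotential w f + ∑ u ∈ G.neighborFinset a, w s(x, f u) := by
  have split (g : V → α) : G.edgePotential w g =
      ∑ e ∈ G.incidenceFinset a, w (e.map g) + ∑ e ∈ G.edgeFinset with a ∉ e, w (e.map g) := by
    rw [edgePotential, incidenceFinset_eq_filter, Finset.sum_filter_add_sum_filter_not]
  have away : ∑ e ∈ G.edgeFinset with a ∉ e, w (e.map (Function.update f a x)) =
      ∑ e ∈ G.edgeFinset with a ∉ e, w (e.map f) := by
    refine Finset.sum_congr rfl fun e he => congrArg w (Sym2.map_congr fun u hu => ?_)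
    exact Function.update_of_ne (by rintro rfl; exact (Finset.mem_filter.1 he).2 hu) _ _
  have near : ∑ u ∈ G.neighborFinset a, w s(x, Function.update f a x u) =
      ∑ u ∈ G.neighborFinset a, w s(x, f u) := by
    refine Finset.sum_congr rfl fun u hu => ?_
    rw [Function.update_of_ne (G.ne_of_adj ((G.mem_neighborFinset a u).1 hu)).symm]
  simp only [split, sum_incidenceFinset_eq_sum_neighborFinset, Sym2.map_mk,
    Function.update_self, near, away]
  ring

end SimpleGraph

theorem stmt_12_general {V : Type*} [Fintype V] {m : ℕ}
    (G : SimpleGraph V) [DecidableRel G.Adj]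
    (T : ℕ) (S : Fin (T + 1) → V → Ranking m)
    (hstep : ∀ t : Fin T, ∃ v : V,
      (∀ u : V, u ≠ v → S t.succ u = S t.castSucc u) ∧
      S t.succ v ≠ S t.castSucc v ∧
      (∀ σ : Ranking m,
        ∑ u ∈ G.neighborFinset v, kt (S t.succ v) (S t.castSucc u) ≤
          ∑ u ∈ G.neighborFinset v, kt σ (S t.castSucc u)) ∧
      ∑ u ∈ G.neighborFinset v, kt (S t.succ v) (S t.castSucc u) <
        ∑ u ∈ G.neighborFinset v, kt (S t.castSucc v) (S t.castSucc u)) :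
    T ≤ G.edgeFinset.card * Nat.choose m 2 := by
  classical
  have hdecrease (t : Fin T) :
      G.edgePotential ktSym2 (S t.succ) < G.edgePotential ktSym2 (S t.castSucc) := by
    obtain ⟨v, hfix, -, -, hlt⟩ := hstep t
    have hupdate := G.edgePotential_update_add ktSym2 (S t.castSucc) v (S t.succ v)
    rw [← Function.eq_update_iff.2 ⟨rfl, hfix⟩] at hupdate
    simp only [ktSym2_mk] at hupdate
    omega
  calc T ≤ G.edgePotential ktSym2 (S 0) :=
        Fin.le_apply_zero_of_forall_succ_lt (fun i => G.edgePotential ktSym2 (S i)) hdecrease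
    _ ≤ G.edgeFinset.card * m.choose 2 :=
        G.edgePotential_le _ _ fun e => Sym2.ind (fun r s => kt_le_choose_two r s) e

/-- any sequence of Kemeny updates in a network in which every
update strictly changes the active voter's opinion has length at most
|E| · C(m,2). -/
theorem stmt_12 {V : Type*} [Fintype V] [DecidableEq V] {m : ℕ}
    (G : SimpleGraph V) [DecidableRel G.Adj]
    (T : ℕ) (S : Fin (T + 1) → V → Ranking m)
    (hstep : ∀ t : Fin T, ∃ v : V,
      (∀ u : V, u ≠ v → S t.succ u = S t.castSucc u) ∧
      S t.succ v ≠ S t.castSucc v ∧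
      (∀ σ : Ranking m,
        ∑ u ∈ G.neighborFinset v, kt (S t.succ v) (S t.castSucc u) ≤
          ∑ u ∈ G.neighborFinset v, kt σ (S t.castSucc u)) ∧
      ∑ u ∈ G.neighborFinset v, kt (S t.succ v) (S t.castSucc u) <
        ∑ u ∈ G.neighborFinset v, kt (S t.castSucc v) (S t.castSucc u)) :
    T ≤ G.edgeFinset.card * Nat.choose m 2 :=
  stmt_12_general G T S hstep
end
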